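/- arXiv:1710.08110 — 4 statements merged into one kernel-verified Lean document; each statement's English description precedes it below -/
import Mathlib

section
/- Let f : ℝ≥0 × ℝ≥0 → ℝ be continuous, bounded above by a constant C₁ on the trajectory, with f(k,K) ≤ 0 whenever k ≥ k̄ for some k̄ > 0. Suppose k : [0,∞) → ℝ is absolutely continuous with k(t) ≥ 0, k(0) = k₀, and c : [0,∞) → ℝ measurable with c(t) ≥ 0, such that k'(t) + c(t) ≤ f(k(t), K(t)) ≤ C₁ for a.e. t. Then k(t) ≤ max{k₀, k̄} for all t ≥ 0. -/
/-!
Let `M = max k₀ k̄` and suppose `k T > M`. Take the last time `s ≤ T` with `k s ≤ M`; it exists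
because `k` is continuous. On `(s, T]` we have `k > M ≥ k̄`, so `k' ≤ -c + f(k, K) ≤ 0` a.e. there,
and hence `k T = k s + ∫ₛᵀ k' ≤ M`, a contradiction.
-/

open MeasureTheory Set

section Primitive

variable {g g' : ℝ → ℝ} {a y₀ : ℝ}

theorem continuousOn_Icc_of_eq_add_integral {T : ℝ}
    (hint : IntervalIntegrable g' volume a T)
    (hg : ∀ t, a ≤ t → g t = y₀ + ∫ s in a..t, g' s) (haT : a ≤ T) :
    ContinuousOn g (Icc a T) := by
  have hprim : ContinuousOn (fun t => y₀ + ∫ s in a..t, g' s) (Icc a T) := by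
    refine continuousOn_const.add ?_
    simpa [uIcc_of_le haT] using
      intervalIntegral.continuousOn_primitive_interval' hint left_mem_uIcc
  exact hprim.congr fun t ht => hg t ht.1

theorem eq_add_integral_of_le {s t : ℝ}
    (hint : ∀ t, a ≤ t → IntervalIntegrable g' volume a t)
    (hg : ∀ t, a ≤ t → g t = y₀ + ∫ u in a..t, g' u) (has : a ≤ s) (hst : s ≤ t) :
    g t = g s + ∫ u in s..t, g' u := by
  have hst_int : IntervalIntegrable g' volume s t :=
    (hint s has).symm.trans (hint t (has.trans hst))
  rw [hg t (has.trans hst), hg s has,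
    ← intervalIntegral.integral_add_adjacent_intervals (hint s has) hst_int, add_assoc]

theorem le_of_eq_add_integral_of_ae_nonpos_above {M : ℝ}
    (hint : ∀ t, a ≤ t → IntervalIntegrable g' volume a t)
    (hg : ∀ t, a ≤ t → g t = y₀ + ∫ u in a..t, g' u)
    (hnonpos : ∀ᵐ t ∂volume.restrict (Ici a), M < g t → g' t ≤ 0) (hy₀ : y₀ ≤ M) :
    ∀ T, a ≤ T → g T ≤ M := by
  intro T haT
  by_contra! hT
  have hga : g a = y₀ := by simpa using hg a le_rfl
  obtain ⟨s, ⟨⟨has, hsT⟩, hgs⟩, hs_last⟩ : ∃ s, IsGreatest {t ∈ Icc a T | g t ≤ M} s := by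
    have hclosed : IsClosed (Icc a T ∩ g ⁻¹' Iic M) :=
      (continuousOn_Icc_of_eq_add_integral (hint T haT) hg haT).preimage_isClosed_of_isClosed
        isClosed_Icc isClosed_Iic
    exact (isCompact_Icc.of_isClosed_subset hclosed inter_subset_left).exists_isGreatest
      ⟨a, ⟨le_rfl, haT⟩, show g a ≤ M from hga ▸ hy₀⟩
  have habove : ∀ t ∈ Ioc s T, M < g t := fun t ht => by
    by_contra! h
    exact (hs_last ⟨⟨has.trans ht.1.le, ht.2⟩, h⟩).not_gt ht.1
  have hg'_nonpos : ∀ᵐ t ∂volume.restrict (Ioc s T), g' t ≤ 0 := by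
    have hsub : Ioc s T ⊆ Ici a := fun t ht => has.trans ht.1.le
    filter_upwards [ae_restrict_of_ae_restrict_of_subset hsub hnonpos,
      ae_restrict_mem measurableSet_Ioc] with t ht hmem
    exact ht (habove t hmem)
  have hintegral : ∫ u in s..T, g' u ≤ 0 := by
    rw [intervalIntegral.integral_of_le hsT]
    exact integral_nonpos_of_ae hg'_nonpos
  have hsplit := eq_add_integral_of_le hint hg has hsT
  linarith

end Primitive

theorem stmt_0_general
    (f : ℝ → ℝ → ℝ) (K k k' c : ℝ → ℝ) (C₁ kbar k₀ : ℝ)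
    (hfneg : ∀ t, 0 ≤ t → ∀ x, kbar ≤ x → f x (K t) ≤ 0)
    (hint : ∀ t, 0 ≤ t → IntervalIntegrable k' volume 0 t)
    (hAC : ∀ t, 0 ≤ t → k t = k₀ + ∫ s in (0:ℝ)..t, k' s)
    (hcnn : ∀ t, 0 ≤ t → 0 ≤ c t)
    (hconstr : ∀ᵐ t ∂(volume.restrict (Ici (0:ℝ))),
      k' t + c t ≤ f (k t) (K t) ∧ f (k t) (K t) ≤ C₁) :
    ∀ t, 0 ≤ t → k t ≤ max k₀ kbar := by
  refine le_of_eq_add_integral_of_ae_nonpos_above hint hAC ?_ (le_max_left _ _)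
  filter_upwards [hconstr, ae_restrict_mem measurableSet_Ici] with t ⟨hk', _⟩ (ht : 0 ≤ t) hkt
  have hf_nonpos := hfneg t ht (k t) ((le_max_right _ _).trans hkt.le)
  linarith [hcnn t ht]

theorem stmt_0
    (f : ℝ → ℝ → ℝ) (K k k' c : ℝ → ℝ) (C₁ kbar k₀ : ℝ)
    (hf : Continuous fun p : ℝ × ℝ => f p.1 p.2)
    (hkbar : 0 < kbar)
    (hfneg : ∀ t, 0 ≤ t → ∀ x, kbar ≤ x → f x (K t) ≤ 0)
    (hint : ∀ t, 0 ≤ t → IntervalIntegrable k' volume 0 t)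
    (hAC : ∀ t, 0 ≤ t → k t = k₀ + ∫ s in (0:ℝ)..t, k' s)
    (hknn : ∀ t, 0 ≤ t → 0 ≤ k t)
    (hcnn : ∀ t, 0 ≤ t → 0 ≤ c t)
    (hconstr : ∀ᵐ t ∂(volume.restrict (Ici (0:ℝ))),
      k' t + c t ≤ f (k t) (K t) ∧ f (k t) (K t) ≤ C₁) :
    ∀ t, 0 ≤ t → k t ≤ max k₀ kbar :=
  stmt_0_general f K k k' c C₁ kbar k₀ hfneg hint hAC hcnn hconstr
end

section
/- Suppose (k,c) is an optimal pair for the growth problem, with k(0) = k₀ > 0, c(t) ≥ c₋(2t₀) > 0 for all t in [0, 2t₀], f continuous with f(0,K) = 0 for all K in the range of the bounded continuous function K(·), and k absolutely continuous with k' = f(k,K) − c a.e. Then k(t) > 0 for every t ≥ 0; in particular there is no t₀ with k(t₀) = 0. -/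
/-!
If `k` vanished at some `t`, then `f (k t) (K t) = 0`; since `k` (an indefinite integral) and `K`
are continuous, `f (k s) (K s)` stays below `c₋ / 2` just to the right of `t`, where `c ≥ c₋`.
Hence `k' ≤ -c₋ / 2` a.e. on some `[t, b]`, and `k b ≤ k t - c₋ (b - t) / 2 < 0`.
-/

open MeasureTheory Set

section AbsolutelyContinuous

variable {k k' : ℝ → ℝ} {a k₀ : ℝ}

theorem eq_add_integral_of_eq_add_primitive
    (hint : ∀ t, a ≤ t → IntervalIntegrable k' volume a t)
    (hAC : ∀ t, a ≤ t → k t = k₀ + ∫ s in a..t, k' s) {b c : ℝ} (hb : a ≤ b) (hc : a ≤ c) :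
    k c = k b + ∫ s in b..c, k' s := by
  rw [hAC c hc, hAC b hb, ← intervalIntegral.integral_interval_sub_left (hint c hc) (hint b hb)]
  ring

theorem continuousOn_Ici_of_eq_add_primitive
    (hint : ∀ t, a ≤ t → IntervalIntegrable k' volume a t)
    (hAC : ∀ t, a ≤ t → k t = k₀ + ∫ s in a..t, k' s) : ContinuousOn k (Ici a) := by
  intro x hx
  have hax : a ≤ x + 1 := by linarith [mem_Ici.1 hx]
  have hprim := intervalIntegral.continuousOn_primitive_interval' (hint (x + 1) hax) left_mem_uIcc
  rw [uIcc_of_le hax] at hprim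
  have hk : ContinuousOn k (Icc a (x + 1)) :=
    (continuousOn_const.add hprim).congr fun t ht => hAC t ht.1
  refine (hk x ⟨hx, by linarith⟩).mono_of_mem_nhdsWithin ?_
  rw [← Ici_inter_Iic]
  exact inter_mem_nhdsWithin _ (Iic_mem_nhds (lt_add_one x))

end AbsolutelyContinuous

theorem intervalIntegral.integral_le_mul_sub_of_ae_le {g : ℝ → ℝ} {a b C : ℝ} (hab : a ≤ b)
    (hg : IntervalIntegrable g volume a b) (hle : ∀ᵐ s ∂volume.restrict (Icc a b), g s ≤ C) :
    ∫ s in a..b, g s ≤ C * (b - a) := by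
  simpa [mul_comm] using intervalIntegral.integral_mono_ae_restrict hab hg intervalIntegrable_const hle

theorem stmt_10_general (f : ℝ → ℝ → ℝ) (K k k' c : ℝ → ℝ) (k₀ : ℝ)
    (hf : Continuous fun p : ℝ × ℝ => f p.1 p.2)
    (hf0 : ∀ y, f 0 y = 0)
    (hKc : Continuous K)
    (hint : ∀ t, 0 ≤ t → IntervalIntegrable k' volume 0 t)
    (hAC : ∀ t, 0 ≤ t → k t = k₀ + ∫ s in (0:ℝ)..t, k' s)
    (hknn : ∀ t, 0 ≤ t → 0 ≤ k t)
    (hsat : ∀ᵐ t ∂(volume.restrict (Ici (0:ℝ))), k' t = f (k t) (K t) - c t)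
    (hclb : ∀ T, 0 < T → ∃ cm, 0 < cm ∧ ∀ t ∈ Icc (0:ℝ) T, cm ≤ c t) :
    ∀ t, 0 ≤ t → 0 < k t := by
  intro t ht
  refine (hknn t ht).lt_of_ne' fun hkt => ?_
  obtain ⟨cm, hcm, hc⟩ := hclb (t + 1) (by linarith)
  have hg : ContinuousWithinAt (fun s => f (k s) (K s)) (Ici t) t :=
    (hf.comp_continuousOn ((continuousOn_Ici_of_eq_add_primitive hint hAC).prodMk
      hKc.continuousOn) t ht).mono (Ici_subset_Ici.2 ht)
  obtain ⟨u, htu, hgu⟩ := mem_nhdsGE_iff_exists_Icc_subset.1 <|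
    hg.eventually_lt_const (show f (k t) (K t) < cm / 2 by simpa [hkt, hf0] using half_pos hcm)
  set b := min u (t + 1)
  have htb : t < b := lt_min htu (by linarith)
  have hdecr : ∀ᵐ s ∂volume.restrict (Icc t b), k' s ≤ -(cm / 2) := by
    filter_upwards [ae_restrict_of_ae_restrict_of_subset (Icc_subset_Ici_self.trans
      (Ici_subset_Ici.2 ht)) hsat, ae_restrict_mem measurableSet_Icc] with s hs hsI
    have hfs : f (k s) (K s) < cm / 2 := hgu ⟨hsI.1, hsI.2.trans (min_le_left _ _)⟩
    have hcs : cm ≤ c s := hc s ⟨ht.trans hsI.1, hsI.2.trans (min_le_right _ _)⟩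
    linarith
  have hkb := eq_add_integral_of_eq_add_primitive hint hAC ht (ht.trans htb.le)
  have hdrop := intervalIntegral.integral_le_mul_sub_of_ae_le htb.le
    ((hint t ht).symm.trans (hint b (ht.trans htb.le))) hdecr
  nlinarith [hknn b (ht.trans htb.le)]

theorem stmt_10 (f : ℝ → ℝ → ℝ) (K k k' c : ℝ → ℝ) (k₀ : ℝ)
    (hf : Continuous fun p : ℝ × ℝ => f p.1 p.2)
    (hf0 : ∀ y, f 0 y = 0)
    (hKc : Continuous K) (hKb : ∃ C, ∀ t, |K t| ≤ C)
    (hk₀ : 0 < k₀)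
    (hint : ∀ t, 0 ≤ t → IntervalIntegrable k' volume 0 t)
    (hAC : ∀ t, 0 ≤ t → k t = k₀ + ∫ s in (0:ℝ)..t, k' s)
    (hknn : ∀ t, 0 ≤ t → 0 ≤ k t)
    (hsat : ∀ᵐ t ∂(volume.restrict (Ici (0:ℝ))), k' t = f (k t) (K t) - c t)
    (hclb : ∀ T, 0 < T → ∃ cm, 0 < cm ∧ ∀ t ∈ Icc (0:ℝ) T, cm ≤ c t) :
    ∀ t, 0 ≤ t → 0 < k t :=
  stmt_10_general f K k k' c k₀ hf hf0 hKc hint hAC hknn hsat hclb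
end

section
/- Let I = [a,b] ⊂ [0,∞), r > 0, U : ℝ≥0 → ℝ≥0 concave, and c : I → ℝ≥0 integrable. Set m_{a,b} = ∫_a^b e^{−rs} ds and X = (1/(b−a)) ∫_a^b c(t) dt. If (b−a) e^{−ra} ≤ 2 m_{a,b}, then ∫_a^b e^{−rt} U(c(t)) dt ≤ m_{a,b} · U(2X). -/
open MeasureTheory Set

theorem stmt_13 (U c : ℝ → ℝ) (a b r : ℝ) (ha : 0 ≤ a) (hab : a < b) (hr : 0 < r)
    (hUconc : ConcaveOn ℝ (Ici 0) U) (hUmono : MonotoneOn U (Ici 0))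
    (hcint : IntervalIntegrable c volume a b) (hcnn : ∀ t, 0 ≤ c t)
    (hcond : (b - a) * Real.exp (-r * a) ≤ 2 * ∫ s in a..b, Real.exp (-r * s)) :
    ∫ t in a..b, Real.exp (-r * t) * U (c t) ≤
      (∫ s in a..b, Real.exp (-r * s)) *
        U (2 * ((b - a)⁻¹ * ∫ t in a..b, c t)) := by
  have hab' : a ≤ b := hab.le
  have hba : (0:ℝ) < b - a := sub_pos.2 hab
  set w : ℝ → ℝ := fun t => Real.exp (-r * t) with hw
  have hwcont : Continuous w := by fun_prop
  have hwint : IntervalIntegrable w volume a b := hwcont.intervalIntegrable a b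
  have hMpos : 0 < ∫ s in a..b, w s :=
    intervalIntegral.intervalIntegral_pos_of_pos hwint (fun x => Real.exp_pos _) hab
  set M := ∫ s in a..b, w s with hM
  have hwc_int : IntervalIntegrable (fun t => w t * c t) volume a b :=
    hcint.continuousOn_mul hwcont.continuousOn
  set J := ∫ t in a..b, w t * c t with hJ
  have hJnn : 0 ≤ J :=
    intervalIntegral.integral_nonneg hab' (fun t _ => mul_nonneg (Real.exp_pos _).le (hcnn t))
  have hcint0 : 0 ≤ ∫ t in a..b, c t := intervalIntegral.integral_nonneg hab' (fun t _ => hcnn t)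
  set X2 := 2 * ((b - a)⁻¹ * ∫ t in a..b, c t) with hX2
  have hX2nn : 0 ≤ X2 := by
    have : 0 ≤ (b - a)⁻¹ := by positivity
    rw [hX2]; positivity
  have hJle : J ≤ Real.exp (-r * a) * ∫ t in a..b, c t := by
    rw [hJ, ← intervalIntegral.integral_const_mul]
    apply intervalIntegral.integral_mono_on hab' hwc_int (hcint.const_mul _)
    intro t ht
    apply mul_le_mul_of_nonneg_right _ (hcnn t)
    exact Real.exp_le_exp.2 (by nlinarith [ht.1])
  have hx0le : J / M ≤ X2 := by
    rw [div_le_iff₀ hMpos]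
    calc J ≤ Real.exp (-r*a) * ∫ t in a..b, c t := hJle
      _ ≤ (2 * M / (b-a)) * ∫ t in a..b, c t := by
          apply mul_le_mul_of_nonneg_right _ hcint0
          rw [le_div_iff₀ hba]; linarith [hcond]
      _ = X2 * M := by rw [hX2]; field_simp
  rcases eq_or_lt_of_le hJnn with hJ0 | hJpos
  · -- degenerate case: ∫ w c = 0, hence c = 0 a.e.
    have hIoc : IntegrableOn (fun t => w t * c t) (Ioc a b) volume := hwc_int.1
    have hset : (∫ t in Ioc a b, w t * c t) = 0 := by
      rw [← intervalIntegral.integral_of_le hab', ← hJ, ← hJ0]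
    have hae : (fun t => w t * c t) =ᵐ[volume.restrict (Ioc a b)] 0 := by
      rw [← integral_eq_zero_iff_of_nonneg _ hIoc] at *
      · exact hset
      · intro t; exact mul_nonneg (Real.exp_pos _).le (hcnn t)
    have hcae : c =ᵐ[volume.restrict (Ioc a b)] 0 := by
      filter_upwards [hae] with t ht
      have : w t ≠ 0 := (Real.exp_pos _).ne'
      simpa [this] using ht
    have hc0 : (∫ t in a..b, c t) = 0 := by
      rw [intervalIntegral.integral_of_le hab']
      rw [integral_congr_ae hcae]
      simp
    have hLHS : (∫ t in a..b, w t * U (c t)) = M * U 0 := by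
      rw [intervalIntegral.integral_of_le hab']
      have : (fun t => w t * U (c t)) =ᵐ[volume.restrict (Ioc a b)] fun t => w t * U 0 := by
        filter_upwards [hcae] with t ht
        simp [ht]
      rw [integral_congr_ae this, integral_mul_const, hM, intervalIntegral.integral_of_le hab']
    rw [hLHS, hX2, hc0]
    simp
  · set x0 := J / M with hx0
    have hx0pos : 0 < x0 := div_pos hJpos hMpos
    set S := (fun y => (U y - U x0) / (y - x0)) '' Ioi x0 with hS
    have hSne : S.Nonempty := ⟨_, mem_image_of_mem _ (by linarith : x0 < x0 + 1)⟩
    have hSbdd : BddAbove S := by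
      refine ⟨(U x0 - U 0) / (x0 - 0), ?_⟩
      rintro z ⟨y, hy, rfl⟩
      exact hUconc.slope_anti_adjacent (mem_Ici.2 le_rfl)
        (mem_Ici.2 (hx0pos.trans hy).le) hx0pos hy
    set k := sSup S with hk
    have hub : ∀ y, x0 < y → (U y - U x0) / (y - x0) ≤ k := fun y hy =>
      le_csSup hSbdd ⟨y, hy, rfl⟩
    have hlb : ∀ x, 0 ≤ x → x < x0 → k ≤ (U x0 - U x) / (x0 - x) := by
      intro x hx hxx0
      apply csSup_le hSne
      rintro z ⟨y, hy, rfl⟩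
      exact hUconc.slope_anti_adjacent (mem_Ici.2 hx)
        (mem_Ici.2 (hx0pos.trans hy).le) hxx0 hy
    have haff : ∀ x, 0 ≤ x → U x ≤ U x0 + k * (x - x0) := by
      intro x hx
      rcases lt_trichotomy x x0 with h | h | h
      · have h2 := hlb x hx h
        have h1 : 0 < x0 - x := by linarith
        rw [le_div_iff₀ h1] at h2
        nlinarith
      · simp [h]
      · have h2 := hub x h
        have h1 : 0 < x - x0 := by linarith
        rw [div_le_iff₀ h1] at h2
        nlinarith
    have haffint : IntervalIntegrable (fun t => w t * (U x0 + k * (c t - x0))) volume a b := by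
      have heq : (fun t => w t * (U x0 + k * (c t - x0)))
          = fun t => (U x0 - k * x0) * w t + k * (w t * c t) := by
        funext t; ring
      rw [heq]
      exact (hwint.const_mul _).add (hwc_int.const_mul _)
    have hgint : IntervalIntegrable (fun t => w t * U (c t)) volume a b := by
      rw [intervalIntegrable_iff_integrableOn_Ioc_of_le hab']
      have hUmax : Monotone (fun x : ℝ => U (max x 0)) := fun x y hxy =>
        hUmono (le_max_right x 0) (le_max_right y 0) (max_le_max hxy le_rfl)
      have hcae : AEMeasurable c (volume.restrict (Ioc a b)) :=
        hcint.1.1.aemeasurable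
      have hm1 : AEMeasurable (fun t => U (max (c t) 0)) (volume.restrict (Ioc a b)) :=
        hUmax.measurable.comp_aemeasurable hcae
      have hm2 : AEMeasurable (fun t => U (c t)) (volume.restrict (Ioc a b)) := by
        have : (fun t => U (max (c t) 0)) = fun t => U (c t) := by
          funext t; rw [max_eq_left (hcnn t)]
        rwa [this] at hm1
      have hmeas : AEStronglyMeasurable (fun t => w t * U (c t)) (volume.restrict (Ioc a b)) :=
        (hwcont.aemeasurable.mul hm2).aestronglyMeasurable
      have hlowint : IntegrableOn (fun t => w t * U 0) (Ioc a b) volume := by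
        have := (hwint.mul_const (U 0))
        rwa [intervalIntegrable_iff_integrableOn_Ioc_of_le hab'] at this
      have haffint' : IntegrableOn (fun t => w t * (U x0 + k * (c t - x0))) (Ioc a b) volume := by
        rwa [intervalIntegrable_iff_integrableOn_Ioc_of_le hab'] at haffint
      apply Integrable.mono'
        (g := fun t => |w t * U 0| + |w t * (U x0 + k * (c t - x0))|)
        (hlowint.abs.add haffint'.abs) hmeas
      refine Filter.Eventually.of_forall fun t => ?_
      have hlow : w t * U 0 ≤ w t * U (c t) :=
        mul_le_mul_of_nonneg_left
          (hUmono (mem_Ici.2 le_rfl) (mem_Ici.2 (hcnn t)) (hcnn t)) (Real.exp_pos _).le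
      have hhigh : w t * U (c t) ≤ w t * (U x0 + k * (c t - x0)) :=
        mul_le_mul_of_nonneg_left (haff (c t) (hcnn t)) (Real.exp_pos _).le
      rw [Real.norm_eq_abs, abs_le]
      constructor
      · have := neg_abs_le (w t * U 0); linarith [abs_nonneg (w t * (U x0 + k * (c t - x0)))]
      · have := le_abs_self (w t * (U x0 + k * (c t - x0))); linarith [abs_nonneg (w t * U 0)]
    have key : (∫ t in a..b, w t * U (c t)) ≤ ∫ t in a..b, w t * (U x0 + k * (c t - x0)) :=
      intervalIntegral.integral_mono_on hab' hgint haffint (fun t _ =>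
        mul_le_mul_of_nonneg_left (haff (c t) (hcnn t)) (Real.exp_pos _).le)
    have heval : (∫ t in a..b, w t * (U x0 + k * (c t - x0))) = U x0 * M := by
      have heq : (fun t => w t * (U x0 + k * (c t - x0)))
          = fun t => (U x0 - k * x0) * w t + k * (w t * c t) := by
        funext t; ring
      rw [heq, intervalIntegral.integral_add (hwint.const_mul _) (hwc_int.const_mul _),
        intervalIntegral.integral_const_mul, intervalIntegral.integral_const_mul, ← hM, ← hJ]
      have hJx : J = x0 * M := by
        rw [hx0, div_mul_cancel₀ _ hMpos.ne']
      rw [hJx]; ring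
    have hUx0 : U x0 ≤ U X2 := hUmono (mem_Ici.2 hx0pos.le) (mem_Ici.2 hX2nn) hx0le
    calc (∫ t in a..b, w t * U (c t)) ≤ U x0 * M := key.trans heval.le
      _ ≤ U X2 * M := mul_le_mul_of_nonneg_right hUx0 hMpos.le
      _ = M * U X2 := mul_comm _ _
end

section
/- Let S : L^∞(D) → C(D) be Lipschitz for the L^∞ norm with Lipschitz constant L, and suppose there exist M > 0 and a function k̄ with the property that for every bounded continuous K with ‖K‖_∞ ≤ M, the associated optimal capital path k*(·,z;K) takes values in [0, max{sup_z k₀(z), k̄(M)}], and L · max{sup_z k₀(z), k̄(M)} + ‖S(0)‖_∞ < M. Then the operator T(K)(t,·) = S(k*(t,·;K)) maps the convex set Y₀ = {K continuous on [0,∞)×D : ‖K‖_∞ ≤ M} into itself. -/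
open Set

theorem stmt_16 {D : Type*} (S : (D → ℝ) → D → ℝ)
    (kstar : (ℝ → D → ℝ) → ℝ → D → ℝ)
    (L M k₀sup S0 kbarM : ℝ) (hL : 0 ≤ L)
    (hLip : ∀ g₁ g₂ : D → ℝ, ∀ B, (∀ z, |g₁ z - g₂ z| ≤ B) →
      ∀ z, |S g₁ z - S g₂ z| ≤ L * B)
    (hS0 : ∀ z, |S (fun _ => 0) z| ≤ S0)
    (hbound : ∀ K : ℝ → D → ℝ, (∀ t z, |K t z| ≤ M) →
      ∀ t z, kstar K t z ∈ Icc 0 (max k₀sup kbarM))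
    (hM : L * max k₀sup kbarM + S0 < M) :
    ∀ K : ℝ → D → ℝ, (∀ t z, |K t z| ≤ M) → ∀ t z, |S (kstar K t) z| ≤ M := by
  intro K hK t z
  have h1 : ∀ w, |kstar K t w - (fun _ => (0:ℝ)) w| ≤ max k₀sup kbarM := by
    intro w
    obtain ⟨h0, h2⟩ := hbound K hK t w
    simp only [sub_zero]
    rwa [abs_of_nonneg h0]
  have h2 := hLip (kstar K t) (fun _ => 0) _ h1 z
  calc |S (kstar K t) z| ≤ |S (kstar K t) z - S (fun _ => 0) z| + |S (fun _ => 0) z| := by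
        have := abs_add_le (S (kstar K t) z - S (fun _ => 0) z) (S (fun _ => 0) z)
        simpa using this
    _ ≤ L * max k₀sup kbarM + S0 := add_le_add h2 (hS0 z)
    _ ≤ M := hM.le
end
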